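/- (No-cloning theorem) Let H be a complex Hilbert space and x, y ∈ H unit vectors with ⟪x,y⟫ ≠ 0 and x, y linearly independent. Fix a unit vector e ∈ H. Then there is no unitary operator U : H ⊗ H → H ⊗ H and no scalars ζ₁, ζ₂ of modulus 1 such that U(x ⊗ e) = ζ₁ · (x ⊗ x) and U(y ⊗ e) = ζ₂ · (y ⊗ y). -/

import Mathlib

/-!
A unitary preserves inner products, so cloning `x` and `y` forces
`⟪x, y⟫ = ⟪x ⊗ e, y ⊗ e⟫ = ζ̄₁ ζ₂ ⟪x ⊗ x, y ⊗ y⟫ = ζ̄₁ ζ₂ ⟪x, y⟫²`. Taking norms and cancelling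
`⟪x, y⟫ ≠ 0` gives `‖⟪x, y⟫‖ = 1 = ‖x‖ ‖y‖`, the equality case of Cauchy–Schwarz, so `y` is a
multiple of `x`.
-/

open scoped InnerProductSpace ComplexConjugate

section InnerProduct

variable {𝕜 E : Type*} [RCLike 𝕜] [NormedAddCommGroup E] [InnerProductSpace 𝕜 E]

theorem not_linearIndependent_pair_of_norm_inner_eq {x y : E} (hx : x ≠ 0) (hy : y ≠ 0)
    (h : ‖⟪x, y⟫_𝕜‖ = ‖x‖ * ‖y‖) : ¬ LinearIndependent 𝕜 ![x, y] := by
  obtain ⟨r, -, rfl⟩ := (norm_inner_eq_norm_iff hx hy).1 h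
  exact fun hind ↦ (LinearIndependent.pair_iff' hx).1 hind r rfl

theorem inner_eq_mul_inner_sq_of_clone {W : Type*} [NormedAddCommGroup W] [InnerProductSpace 𝕜 W]
    (tp : E → E → W) (htp : ∀ a b c d : E, ⟪tp a c, tp b d⟫_𝕜 = ⟪a, b⟫_𝕜 * ⟪c, d⟫_𝕜)
    (U : W →ₗᵢ[𝕜] W) {x y e : E} (he : ‖e‖ = 1) {ζ₁ ζ₂ : 𝕜}
    (hUx : U (tp x e) = ζ₁ • tp x x) (hUy : U (tp y e) = ζ₂ • tp y y) :
    ⟪x, y⟫_𝕜 = conj ζ₁ * ζ₂ * ⟪x, y⟫_𝕜 ^ 2 := by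
  have hee : ⟪e, e⟫_𝕜 = 1 := by simp [he]
  calc ⟪x, y⟫_𝕜 = ⟪tp x e, tp y e⟫_𝕜 := by rw [htp, hee, mul_one]
    _ = ⟪U (tp x e), U (tp y e)⟫_𝕜 := (U.inner_map_map _ _).symm
    _ = conj ζ₁ * ζ₂ * ⟪x, y⟫_𝕜 ^ 2 := by
      rw [hUx, hUy, inner_smul_left, inner_smul_right, htp]; ring

end InnerProduct

theorem no_cloning_general
    {H W : Type*} [NormedAddCommGroup H] [InnerProductSpace ℂ H]
    [NormedAddCommGroup W] [InnerProductSpace ℂ W]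
    (tp : H → H → W)
    (htp : ∀ a b c d : H, (inner ℂ (tp a c) (tp b d) : ℂ) = (inner ℂ a b : ℂ) * (inner ℂ c d : ℂ))
    (x y e : H) (hx : ‖x‖ = 1) (hy : ‖y‖ = 1) (he : ‖e‖ = 1)
    (hxy : (inner ℂ x y : ℂ) ≠ 0) (hind : LinearIndependent ℂ ![x, y]) :
    ¬ ∃ (U : W ≃ₗᵢ[ℂ] W) (ζ₁ ζ₂ : ℂ), ‖ζ₁‖ = 1 ∧ ‖ζ₂‖ = 1 ∧
        U (tp x e) = ζ₁ • tp x x ∧ U (tp y e) = ζ₂ • tp y y := by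
  rintro ⟨U, ζ₁, ζ₂, hζ₁, hζ₂, hUx, hUy⟩
  have hclone := inner_eq_mul_inner_sq_of_clone tp htp U.toLinearIsometry he hUx hUy
  have hnorm : ‖⟪x, y⟫_ℂ‖ = 1 := by
    have h := congrArg norm hclone
    rw [norm_mul, norm_mul, RCLike.norm_conj, hζ₁, hζ₂, one_mul, one_mul, norm_pow, sq] at h
    exact ((mul_eq_left₀ (norm_ne_zero_iff.2 hxy)).1 h.symm)
  refine not_linearIndependent_pair_of_norm_inner_eq ?_ ?_ ?_ hind
  · exact norm_ne_zero_iff.1 (by simp [hx])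
  · exact norm_ne_zero_iff.1 (by simp [hy])
  · rw [hnorm, hx, hy, one_mul]

/-- **No-cloning theorem.** Let `H` be a complex Hilbert space and
`x, y ∈ H` unit vectors with `⟪x, y⟫ ≠ 0` and `x, y` linearly independent.  Fix a unit
vector `e ∈ H`.  Then there is no unitary operator `U : H ⊗ H → H ⊗ H` and no scalars
`ζ₁, ζ₂` of modulus `1` with `U (x ⊗ e) = ζ₁ • (x ⊗ x)` and `U (y ⊗ e) = ζ₂ • (y ⊗ y)`.

Here the Hilbert tensor product `H ⊗ H` is formalized abstractly: `W` is a complex Hilbert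
space together with a map `tp : H → H → W` (the elementary tensors) satisfying the
characteristic inner-product identity `⟪a ⊗ c, b ⊗ d⟫ = ⟪a, b⟫ · ⟪c, d⟫`, and a unitary
operator is a surjective linear isometry, i.e. a linear isometric equivalence. -/
theorem no_cloning
    {H W : Type*} [NormedAddCommGroup H] [InnerProductSpace ℂ H] [CompleteSpace H]
    [NormedAddCommGroup W] [InnerProductSpace ℂ W] [CompleteSpace W]
    (tp : H → H → W)
    (htp : ∀ a b c d : H, (inner ℂ (tp a c) (tp b d) : ℂ) = (inner ℂ a b : ℂ) * (inner ℂ c d : ℂ))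
    (x y e : H) (hx : ‖x‖ = 1) (hy : ‖y‖ = 1) (he : ‖e‖ = 1)
    (hxy : (inner ℂ x y : ℂ) ≠ 0) (hind : LinearIndependent ℂ ![x, y]) :
    ¬ ∃ (U : W ≃ₗᵢ[ℂ] W) (ζ₁ ζ₂ : ℂ), ‖ζ₁‖ = 1 ∧ ‖ζ₂‖ = 1 ∧
        U (tp x e) = ζ₁ • tp x x ∧ U (tp y e) = ζ₂ • tp y y :=
  no_cloning_general tp htp x y e hx hy he hxy hind
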